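/- Good containment function for interacting species with immigration and harvesting (Lemma 5.8): Let E = [0,∞)^d and s(x) = Σ_{i=1}^d x_i. Let T_int ⊆ ℤ^d be a finite set, let r_Γ : E → [0,∞) for Γ ∈ T_int and a_i, b_i : E → (0,∞) for i = 1,…,d be continuous, and suppose there exist C > 0 and M ≥ e such that for all x with s(x) ≥ M: r_Γ(x) ≤ C·s(x)·log s(x) for every Γ ∈ T_int with Σ_i Γ_i > 0, and a_i(x) + b_i(x) ≤ C·s(x)·log s(x) for every i. Define H_0(x,p) = Σ_{Γ∈T_int} r_Γ(x)(e^{⟨Γ,p⟩} − 1), and for J ⊆ {1,…,d} and x ∈ E_J = {x ∈ E : x_i = 0 for i ∈ J}: H_J(x,p) = H_0(x,p) + Σ_{k∈J} a_k(x)(e^{p_k} − 1) + Σ_{l∉J} [a_l(x)(e^{p_l} − 1) + b_l(x)(e^{−p_l} − 1)]. Then there exists a twice continuously differentiable Υ : E → [0,∞) with Υ(x₀) = 0 for some x₀ ∈ E, {x ∈ E : Υ(x) ≤ c} compact for every c ≥ 0, and max_{J⊆{1,…,d}} sup_{x∈E_J} H_J(x, ∇Υ(x)) < ∞. -/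

import Mathlib

open Set Filter

noncomputable section

/-- `ℝ^d` with the Euclidean structure. -/
abbrev Euc (d : ℕ) := EuclideanSpace ℝ (Fin d)

/-- The nonnegative orthant `E = [0,∞)^d`. -/
def orthant (d : ℕ) : Set (Euc d) := {x | ∀ i, 0 ≤ x i}

/-- `E_J = {x ∈ E : x_i = 0 for all i ∈ J}`. -/
def orthantEJ (d : ℕ) (J : Finset (Fin d)) : Set (Euc d) :=
  {x ∈ orthant d | ∀ i ∈ J, x i = 0}

/-!
Take `Υ(x) = φ(s(x))` with `φ(u) = log (1 + log (1 + u²))`. Then `∇Υ(x) = φ'(s(x)) • (1, …, 1)`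
with `0 ≤ φ' ≤ 1` on `[0, ∞)` and `u log u · φ'(u) ≤ 1` for `u ≥ e`. Along this gradient the
harvesting terms are nonpositive, and `eᵗ - 1 ≤ t eᵗ` bounds every other term by
`rate · (∑ Γ) φ'(s) e^{∑ Γ}`, which the growth condition `rate ≤ C s log s` makes a constant once
`s ≥ M`. On the compact set `{s ≤ M}` the Hamiltonian is bounded by continuity, and the sublevel
sets of `Υ` are compact because `φ` is unbounded.
-/

open Real

def loglogProfile (u : ℝ) : ℝ := log (1 + log (1 + u ^ 2))

def loglogProfileDeriv (u : ℝ) : ℝ := 2 * u / (1 + u ^ 2) / (1 + log (1 + u ^ 2))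

lemma one_le_one_add_sq (u : ℝ) : 1 ≤ 1 + u ^ 2 := le_add_of_nonneg_right (sq_nonneg u)

lemma one_le_one_add_log_one_add_sq (u : ℝ) : 1 ≤ 1 + log (1 + u ^ 2) :=
  le_add_of_nonneg_right (log_nonneg (one_le_one_add_sq u))

lemma loglogProfile_nonneg (u : ℝ) : 0 ≤ loglogProfile u :=
  log_nonneg (one_le_one_add_log_one_add_sq u)

lemma hasDerivAt_loglogProfile (u : ℝ) : HasDerivAt loglogProfile (loglogProfileDeriv u) u := by
  have h := (((hasDerivAt_pow 2 u).const_add 1).log (by linarith [one_le_one_add_sq u])).const_add 1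
    |>.log (by linarith [one_le_one_add_log_one_add_sq u])
  exact h.congr_deriv (by norm_num [loglogProfileDeriv])

lemma contDiff_loglogProfile : ContDiff ℝ 2 loglogProfile := by
  have h : ContDiff ℝ 2 fun u : ℝ => 1 + u ^ 2 := by fun_prop
  exact (contDiff_const.add (h.log fun u => by linarith [one_le_one_add_sq u])).log
    fun u => by linarith [one_le_one_add_log_one_add_sq u]

lemma continuous_loglogProfileDeriv : Continuous loglogProfileDeriv := by
  have h : Continuous fun u : ℝ => 1 + u ^ 2 := by fun_prop
  refine ((by fun_prop : Continuous fun u : ℝ => 2 * u).div h fun u => ?_).div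
    (continuous_const.add (h.log fun u => ?_)) fun u => ?_
  · linarith [one_le_one_add_sq u]
  · linarith [one_le_one_add_sq u]
  · linarith [one_le_one_add_log_one_add_sq u]

lemma loglogProfileDeriv_nonneg {u : ℝ} (hu : 0 ≤ u) : 0 ≤ loglogProfileDeriv u := by
  have := one_le_one_add_sq u
  have := one_le_one_add_log_one_add_sq u
  unfold loglogProfileDeriv
  positivity

lemma loglogProfileDeriv_le_one {u : ℝ} (hu : 0 ≤ u) : loglogProfileDeriv u ≤ 1 := by
  have h2u : 2 * u / (1 + u ^ 2) ≤ 1 := by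
    rw [div_le_one (by linarith [one_le_one_add_sq u])]
    nlinarith [sq_nonneg (1 - u)]
  exact (div_le_self (by have := one_le_one_add_sq u; positivity)
    (one_le_one_add_log_one_add_sq u)).trans h2u

lemma mul_log_mul_loglogProfileDeriv_le_one {u : ℝ} (hu : exp 1 ≤ u) :
    u * log u * loglogProfileDeriv u ≤ 1 := by
  have hu0 : 0 < u := (exp_pos 1).trans_le hu
  have hlog : 1 ≤ log u := (le_log_iff_exp_le hu0).2 hu
  have hsq : u ^ 2 ≤ 1 + u ^ 2 := le_add_of_nonneg_left zero_le_one
  have hlog2 : 2 * log u ≤ 1 + log (1 + u ^ 2) := by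
    have := log_le_log (by positivity) hsq
    rw [log_pow] at this
    push_cast at this
    linarith
  have hden : 0 < (1 + u ^ 2) * (1 + log (1 + u ^ 2)) := by
    have := one_le_one_add_sq u
    have := one_le_one_add_log_one_add_sq u
    positivity
  rw [loglogProfileDeriv, div_div, mul_div_assoc', div_le_one hden]
  nlinarith [mul_le_mul hsq hlog2 (by linarith) (by positivity)]

lemma le_exp_exp_of_loglogProfile_le {u c : ℝ} (hu : 0 ≤ u) (h : loglogProfile u ≤ c) :
    u ≤ exp (exp c) := by
  have h1 : 1 + log (1 + u ^ 2) ≤ exp c :=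
    (log_le_iff_le_exp (by linarith [one_le_one_add_log_one_add_sq u])).1 h
  have h2 : 1 + u ^ 2 ≤ exp (exp c) :=
    (log_le_iff_le_exp (by linarith [one_le_one_add_sq u])).1 (by linarith)
  nlinarith [add_one_le_exp (exp c)]

lemma exp_sub_one_le_mul_exp (t : ℝ) : exp t - 1 ≤ t * exp t := by
  have h := add_one_le_exp (-t)
  rw [exp_neg] at h
  nlinarith [exp_pos t, mul_inv_cancel₀ (exp_pos t).ne']

lemma mul_exp_mul_sub_one_le {r C w p n : ℝ} (hC : 0 ≤ C) (hw : 0 ≤ w) (hp0 : 0 ≤ p)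
    (hp1 : p ≤ 1) (hn : 0 ≤ n) (hwp : w * p ≤ 1) (hrw : r ≤ C * w) :
    r * (exp (n * p) - 1) ≤ C * (n * exp n) := by
  have hnp : 0 ≤ n * p := mul_nonneg hn hp0
  have hexp : exp (n * p) - 1 ≤ n * p * exp n :=
    (exp_sub_one_le_mul_exp _).trans
      (mul_le_mul_of_nonneg_left (exp_le_exp.2 (mul_le_of_le_one_right hn hp1)) hnp)
  calc r * (exp (n * p) - 1) ≤ C * w * (n * p * exp n) :=
        mul_le_mul hrw hexp (by linarith [add_one_le_exp (n * p)]) (by positivity)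
    _ = C * (n * exp n) * (w * p) := by ring
    _ ≤ C * (n * exp n) := mul_le_of_le_one_right (by positivity) hwp

lemma mul_exp_mul_sub_one_le_abs {r C w p n : ℝ} (hr : 0 ≤ r) (hC : 0 ≤ C) (hw : 0 ≤ w)
    (hp0 : 0 ≤ p) (hp1 : p ≤ 1) (hwp : w * p ≤ 1) (hrw : 0 < n → r ≤ C * w) :
    r * (exp (n * p) - 1) ≤ C * (|n| * exp |n|) := by
  rcases lt_or_ge 0 n with hn | hn
  · rw [abs_of_pos hn]
    exact mul_exp_mul_sub_one_le hC hw hp0 hp1 hn.le hwp (hrw hn)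
  · have hexp : exp (n * p) - 1 ≤ 0 :=
      sub_nonpos.2 (exp_le_one_iff.2 (mul_nonpos_of_nonpos_of_nonneg hn hp0))
    exact (mul_nonpos_of_nonneg_of_nonpos hr hexp).trans (by positivity)

section DiagonalHamiltonian

variable {ι : Type*} [Fintype ι]

/-- `H_J(x, p • (1, …, 1))` for `J` the set of all species, with `r Γ = r_Γ(x)` and
`a i = a_i(x)`. -/
def diagonalHamiltonian (T : Finset (ι → ℤ)) (r : (ι → ℤ) → ℝ) (a : ι → ℝ) (p : ℝ) : ℝ :=
  ∑ Γ ∈ T, r Γ * (exp (∑ i, (Γ i : ℝ) * p) - 1) + ∑ i, a i * (exp p - 1)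

lemma hamiltonian_le_diagonalHamiltonian [DecidableEq ι] (T : Finset (ι → ℤ))
    (r : (ι → ℤ) → ℝ) (a b : ι → ℝ) (J : Finset ι) {p : ℝ} (hb : ∀ i, 0 ≤ b i) (hp : 0 ≤ p) :
    ∑ Γ ∈ T, r Γ * (exp (∑ i, (Γ i : ℝ) * p) - 1) + ∑ k ∈ J, a k * (exp p - 1) +
        ∑ l ∈ Jᶜ, (a l * (exp p - 1) + b l * (exp (-p) - 1)) ≤
      diagonalHamiltonian T r a p := by
  have hharvest : ∀ l, b l * (exp (-p) - 1) ≤ 0 := fun l =>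
    mul_nonpos_of_nonneg_of_nonpos (hb l) (sub_nonpos.2 (exp_le_one_iff.2 (neg_nonpos.2 hp)))
  rw [add_assoc, diagonalHamiltonian, ← Finset.sum_add_sum_compl J]
  gcongr with l
  linarith [hharvest l]

lemma diagonalHamiltonian_le (T : Finset (ι → ℤ)) {r : (ι → ℤ) → ℝ} {a : ι → ℝ} {C w p : ℝ}
    (hr : ∀ Γ ∈ T, 0 ≤ r Γ) (hC : 0 ≤ C) (hw : 0 ≤ w) (hp0 : 0 ≤ p) (hp1 : p ≤ 1)
    (hwp : w * p ≤ 1) (hrw : ∀ Γ ∈ T, 0 < ∑ i, Γ i → r Γ ≤ C * w) (ha : ∀ i, a i ≤ C * w) :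
    diagonalHamiltonian T r a p ≤
      ∑ Γ ∈ T, C * (|∑ i, (Γ i : ℝ)| * exp |∑ i, (Γ i : ℝ)|) + ∑ _i : ι, C * exp 1 := by
  refine add_le_add (Finset.sum_le_sum fun Γ hΓ => ?_) (Finset.sum_le_sum fun i _ => ?_)
  · simpa only [Finset.sum_mul] using
      mul_exp_mul_sub_one_le_abs (n := ∑ i, (Γ i : ℝ)) (hr Γ hΓ) hC hw hp0 hp1 hwp
        fun hn => hrw Γ hΓ (by exact_mod_cast hn)
  · simpa using mul_exp_mul_sub_one_le (n := 1) hC hw hp0 hp1 zero_le_one hwp (ha i)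

end DiagonalHamiltonian

lemma isClosed_orthant (d : ℕ) : IsClosed (orthant d) := by
  simp only [orthant, ofPred_forall]
  exact isClosed_iInter fun i => isClosed_le continuous_const (EuclideanSpace.proj i).continuous

lemma sum_nonneg_of_mem_orthant {d : ℕ} {x : Euc d} (hx : x ∈ orthant d) : 0 ≤ ∑ i, x i :=
  Finset.sum_nonneg fun i _ => hx i

lemma isCompact_orthant_sum_le (d : ℕ) (R : ℝ) : IsCompact {x ∈ orthant d | ∑ i, x i ≤ R} := by
  have hbox : IsCompact (WithLp.toLp 2 '' univ.pi fun _ : Fin d => Icc 0 R) :=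
    (isCompact_univ_pi fun _ => isCompact_Icc).image (PiLp.continuous_toLp 2 _)
  refine hbox.of_isClosed_subset ((isClosed_orthant d).inter
    (isClosed_le (show Continuous fun x : Euc d => ∑ i, x i by fun_prop) continuous_const)) ?_
  rintro x ⟨hx, hxR⟩
  refine ⟨WithLp.ofLp x, fun i _ => ⟨hx i, ?_⟩, rfl⟩
  exact (Finset.single_le_sum (fun j _ => hx j) (Finset.mem_univ i)).trans hxR

lemma exists_forall_le_of_forall_le_of_le_sum {d : ℕ} {f : Euc d → ℝ} {M B : ℝ}
    (hf : ContinuousOn f (orthant d)) (hB : ∀ x ∈ orthant d, M ≤ ∑ i, x i → f x ≤ B) :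
    ∃ C, ∀ x ∈ orthant d, f x ≤ C := by
  obtain ⟨C, hC⟩ := (isCompact_orthant_sum_le d M).bddAbove_image (hf.mono fun x hx => hx.1)
  refine ⟨max B C, fun x hx => ?_⟩
  rcases le_total M (∑ i, x i) with hM | hM
  · exact (hB x hx hM).trans (le_max_left _ _)
  · exact (hC ⟨x, ⟨hx, hM⟩, rfl⟩).trans (le_max_right _ _)

def sumContainment (d : ℕ) (x : Euc d) : ℝ := loglogProfile (∑ i, x i)

lemma contDiff_sumContainment (d : ℕ) : ContDiff ℝ 2 (sumContainment d) :=
  contDiff_loglogProfile.comp (by fun_prop)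

lemma gradient_sumContainment_apply {d : ℕ} (x : Euc d) (i : Fin d) :
    gradient (sumContainment d) x i = loglogProfileDeriv (∑ j, x j) := by
  set L : Euc d →L[ℝ] ℝ := ∑ j, EuclideanSpace.proj j
  have hL : ∀ y, L y = ∑ j, y j := fun y => by simp [L]
  have hF : HasFDerivAt (sumContainment d) (loglogProfileDeriv (∑ j, x j) • L) x := by
    have h := (hasDerivAt_loglogProfile (L x)).comp_hasFDerivAt x L.hasFDerivAt
    rw [hL] at h
    exact h.congr_of_eventuallyEq (Eventually.of_forall fun y => by simp [sumContainment, hL])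
  have hdual : InnerProductSpace.toDual ℝ (Euc d)
      (loglogProfileDeriv (∑ j, x j) • WithLp.toLp 2 fun _ => 1) =
        loglogProfileDeriv (∑ j, x j) • L := by
    ext y
    simp [hL, EuclideanSpace.inner_eq_star_dotProduct, dotProduct]
  rw [← hdual, ← hasGradientAt_iff_hasFDerivAt] at hF
  simp [hF.gradient]

lemma isCompact_sublevel_sumContainment (d : ℕ) (c : ℝ) :
    IsCompact {x ∈ orthant d | sumContainment d x ≤ c} :=
  (isCompact_orthant_sum_le d (exp (exp c))).of_isClosed_subset
    ((isClosed_orthant d).inter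
      (isClosed_le (contDiff_sumContainment d).continuous continuous_const))
    fun _ ⟨hx, hc⟩ => ⟨hx, le_exp_exp_of_loglogProfile_le (sum_nonneg_of_mem_orthant hx) hc⟩

theorem interacting_species_good_containment_general {d : ℕ}
    (T : Finset (Fin d → ℤ))
    (r : (Fin d → ℤ) → Euc d → ℝ) (a b : Fin d → Euc d → ℝ)
    (hrc : ∀ Γ ∈ T, ContinuousOn (r Γ) (orthant d))
    (hrnn : ∀ Γ ∈ T, ∀ x ∈ orthant d, 0 ≤ r Γ x)
    (hac : ∀ i, ContinuousOn (a i) (orthant d))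
    (hbpos : ∀ i, ∀ x ∈ orthant d, 0 < b i x)
    (hgrowth : ∃ C > (0:ℝ), ∃ M ≥ Real.exp 1, ∀ x ∈ orthant d,
      M ≤ ∑ i, x i →
        (∀ Γ ∈ T, 0 < ∑ i, Γ i →
          r Γ x ≤ C * (∑ i, x i) * Real.log (∑ i, x i)) ∧
        (∀ i, a i x + b i x ≤ C * (∑ i, x i) * Real.log (∑ i, x i))) :
    ∃ Υ : Euc d → ℝ, ContDiff ℝ 2 Υ ∧ (∀ x ∈ orthant d, 0 ≤ Υ x) ∧
      (∃ x₀ ∈ orthant d, Υ x₀ = 0) ∧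
      (∀ c : ℝ, 0 ≤ c → IsCompact {x ∈ orthant d | Υ x ≤ c}) ∧
      ∃ C' : ℝ, ∀ J : Finset (Fin d), ∀ x ∈ orthantEJ d J,
        ((∑ Γ ∈ T, r Γ x *
            (Real.exp (∑ i, (Γ i : ℝ) * gradient Υ x i) - 1)) +
          (∑ k ∈ J, a k x * (Real.exp (gradient Υ x k) - 1)) +
          (∑ l ∈ Jᶜ, (a l x * (Real.exp (gradient Υ x l) - 1) +
            b l x * (Real.exp (-(gradient Υ x l)) - 1)))) ≤ C' := by
  obtain ⟨C, hC, M, hM, hgrowth⟩ := hgrowth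
  set p : Euc d → ℝ := fun x => loglogProfileDeriv (∑ i, x i)
  have hp : Continuous p := continuous_loglogProfileDeriv.comp (by fun_prop)
  have hG : ContinuousOn (fun x => diagonalHamiltonian T (r · x) (a · x) (p x)) (orthant d) :=
    (continuousOn_finsetSum T fun Γ hΓ => (hrc Γ hΓ).mul (by fun_prop)).add
      (continuousOn_finsetSum _ fun i _ => (hac i).mul (by fun_prop))
  obtain ⟨C', hC'⟩ := exists_forall_le_of_forall_le_of_le_sum hG fun x hx hMx => by
    obtain ⟨hr, hab⟩ := hgrowth x hx hMx
    have hu : exp 1 ≤ ∑ i, x i := hM.trans hMx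
    refine diagonalHamiltonian_le T (fun Γ hΓ => hrnn Γ hΓ x hx) hC.le
      (mul_log_nonneg ((one_le_exp zero_le_one).trans hu))
      (loglogProfileDeriv_nonneg (sum_nonneg_of_mem_orthant hx))
      (loglogProfileDeriv_le_one (sum_nonneg_of_mem_orthant hx))
      (mul_log_mul_loglogProfileDeriv_le_one hu) (fun Γ hΓ hn => ?_) fun i => ?_
    · rw [← mul_assoc]; exact hr Γ hΓ hn
    · linarith [hab i, hbpos i x hx]
  refine ⟨sumContainment d, contDiff_sumContainment d, fun x _ => loglogProfile_nonneg _,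
    ⟨0, fun _ => le_rfl, by simp [sumContainment, loglogProfile]⟩,
    fun c _ => isCompact_sublevel_sumContainment d c, C', fun J x ⟨hx, _⟩ => ?_⟩
  simp only [gradient_sumContainment_apply]
  exact (hamiltonian_le_diagonalHamiltonian T _ _ _ J (fun l => (hbpos l x hx).le)
    (loglogProfileDeriv_nonneg (sum_nonneg_of_mem_orthant hx))).trans (hC' x hx)

/-- Good containment function for interacting species with immigration and harvesting
(Lemma 5.8): under the stated growth conditions on the rates `r_Γ`, `a_i`, `b_i`, the
generating set of Hamiltonians `{H_J}` admits a good containment function `Υ`. -/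
theorem interacting_species_good_containment {d : ℕ}
    (T : Finset (Fin d → ℤ))
    (r : (Fin d → ℤ) → Euc d → ℝ) (a b : Fin d → Euc d → ℝ)
    (hrc : ∀ Γ ∈ T, ContinuousOn (r Γ) (orthant d))
    (hrnn : ∀ Γ ∈ T, ∀ x ∈ orthant d, 0 ≤ r Γ x)
    (hac : ∀ i, ContinuousOn (a i) (orthant d))
    (hbc : ∀ i, ContinuousOn (b i) (orthant d))
    (hapos : ∀ i, ∀ x ∈ orthant d, 0 < a i x)
    (hbpos : ∀ i, ∀ x ∈ orthant d, 0 < b i x)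
    (hgrowth : ∃ C > (0:ℝ), ∃ M ≥ Real.exp 1, ∀ x ∈ orthant d,
      M ≤ ∑ i, x i →
        (∀ Γ ∈ T, 0 < ∑ i, Γ i →
          r Γ x ≤ C * (∑ i, x i) * Real.log (∑ i, x i)) ∧
        (∀ i, a i x + b i x ≤ C * (∑ i, x i) * Real.log (∑ i, x i))) :
    ∃ Υ : Euc d → ℝ, ContDiff ℝ 2 Υ ∧ (∀ x ∈ orthant d, 0 ≤ Υ x) ∧
      (∃ x₀ ∈ orthant d, Υ x₀ = 0) ∧
      (∀ c : ℝ, 0 ≤ c → IsCompact {x ∈ orthant d | Υ x ≤ c}) ∧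
      ∃ C' : ℝ, ∀ J : Finset (Fin d), ∀ x ∈ orthantEJ d J,
        ((∑ Γ ∈ T, r Γ x *
            (Real.exp (∑ i, (Γ i : ℝ) * gradient Υ x i) - 1)) +
          (∑ k ∈ J, a k x * (Real.exp (gradient Υ x k) - 1)) +
          (∑ l ∈ Jᶜ, (a l x * (Real.exp (gradient Υ x l) - 1) +
            b l x * (Real.exp (-(gradient Υ x l)) - 1)))) ≤ C' :=
  interacting_species_good_containment_general T r a b hrc hrnn hac hbpos hgrowth
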